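/- arXiv:1208.4445 — 6 statements merged into one kernel-verified Lean document; each statement's English description precedes it below -/
import Mathlib

section
/- Let n ≥ 3, 0 < m ≤ (n-2)/n, η > 0, α < 0 and β ≤ 0. Then there is no positive C² function v on [0,∞) satisfying ((n-1)/m)((v^m)'' + ((n-1)/r)(v^m)') + αv + βrv' = 0 on (0,∞) with v(0) = η and v'(0) = 0. -/
/-!
With `u = v^m` and the flux `w = r^(n-1) u'`, the equation reads
`w' = m/(n-1) · r^(n-1) (-α v - β r v')`. Since `w(0+) = 0` and the right-hand side is positive
wherever `w ≥ 0` (as `α < 0 ≤ -β`), the flux never becomes negative; so `v` is nondecreasing and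
`w' ≥ c r^(n-1) u^q` with `c = -α m/(n-1)` and `q = 1/m > 1`. This is the radial form of
`Δu ≥ c u^q`, which has no entire solutions (Keller–Osserman): integrating once shows that `u`
doubles from `R` to `2R` once `R` is large, multiplying by the flux gives an energy estimate
`u' ≥ κ u^((q+1)/2)` on `[2R, 4R]`, and such a superlinear differential inequality forces blow-up
within a length bounded independently of `R`, hence shorter than `2R` once `R` is large.
-/

open Real Set Filter Topology

lemma mul_sub_le_sub_of_hasDerivAt {f f' : ℝ → ℝ} {a b C : ℝ} (hab : a ≤ b)
    (hf : ∀ x ∈ Icc a b, HasDerivAt f (f' x) x) (hC : ∀ x ∈ Ioo a b, C ≤ f' x) :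
    C * (b - a) ≤ f b - f a := by
  refine (convex_Icc a b).mul_sub_le_image_sub_of_le_deriv
    (fun x hx => (hf x hx).continuousAt.continuousWithinAt) (fun x hx => ?_) (fun x hx => ?_)
    a (left_mem_Icc.2 hab) b (right_mem_Icc.2 hab) hab
  all_goals rw [interior_Icc] at hx
  · exact (hf x (Ioo_subset_Icc_self hx)).differentiableAt.differentiableWithinAt
  · rw [(hf x (Ioo_subset_Icc_self hx)).deriv]
    exact hC x hx

lemma mul_sub_le_rpow_one_sub_of_mul_rpow_le_deriv {u u' : ℝ → ℝ} {a b κ p : ℝ} (hab : a ≤ b)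
    (hp : 1 < p) (hu : ∀ x ∈ Icc a b, 0 < u x) (hu' : ∀ x ∈ Icc a b, HasDerivAt u (u' x) x)
    (hκ : ∀ x ∈ Ioo a b, κ * u x ^ p ≤ u' x) :
    κ * (p - 1) * (b - a) ≤ u a ^ (1 - p) := by
  have hderiv : ∀ x ∈ Icc a b,
      HasDerivAt (fun y => -u y ^ (1 - p)) (-(u' x * (1 - p) * u x ^ (-p))) x := by
    intro x hx
    have h := (hu' x hx).rpow_const (p := 1 - p) (Or.inl (hu x hx).ne')
    rw [show 1 - p - 1 = -p by ring] at h
    exact h.neg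
  have hbound : ∀ x ∈ Ioo a b, κ * (p - 1) ≤ -(u' x * (1 - p) * u x ^ (-p)) := by
    intro x hx
    have hux := hu x (Ioo_subset_Icc_self hx)
    have hcancel : u x ^ p * u x ^ (-p) = 1 := by
      rw [← rpow_add hux, add_neg_cancel, rpow_zero]
    have h := mul_le_mul_of_nonneg_right (hκ x hx)
      (mul_nonneg (sub_nonneg.2 hp.le) (rpow_pos_of_pos hux (-p)).le)
    linear_combination h - κ * (p - 1) * hcancel
  have h := mul_sub_le_sub_of_hasDerivAt hab hderiv hbound
  have hb : 0 ≤ u b ^ (1 - p) := (rpow_pos_of_pos (hu b (right_mem_Icc.2 hab)) _).le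
  linarith

lemma nonneg_of_tendsto_zero_of_hasDerivAt {w W : ℝ → ℝ}
    (hw : ∀ r, 0 < r → HasDerivAt w (W r) r) (hlim : Tendsto w (𝓝[>] 0) (𝓝 0))
    (hnear : ∀ᶠ r in 𝓝[>] 0, 0 < W r) (hW : ∀ r, 0 < r → w r = 0 → 0 < W r) :
    ∀ r, 0 < r → 0 ≤ w r := by
  obtain ⟨δ, hδ, hWδ⟩ := mem_nhdsGT_iff_exists_Ioo_subset.1 hnear
  have hnear_nonneg : ∀ a ∈ Ioo 0 δ, 0 ≤ w a := by
    intro a ha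
    refine le_of_tendsto hlim ?_
    filter_upwards [Ioo_mem_nhdsGT ha.1] with s hs
    have h := mul_sub_le_sub_of_hasDerivAt hs.2.le (fun x hx => hw x (hs.1.trans_le hx.1))
      (fun x hx => (hWδ ⟨hs.1.trans hx.1, hx.2.trans ha.2⟩).le)
    linarith
  intro r hr
  have hmin : 0 < min r δ := lt_min hr hδ
  obtain ⟨a, ha, har⟩ : ∃ a ∈ Ioo 0 δ, a ≤ r :=
    ⟨min r δ / 2, ⟨by positivity, by linarith [min_le_right r δ]⟩, by linarith [min_le_left r δ]⟩
  have h := image_le_of_deriv_right_lt_deriv_boundary' (f := fun x => -w x) (f' := fun x => -W x)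
    (B := fun _ => 0) (B' := fun _ => 0)
    (fun x hx => (hw x (ha.1.trans_le hx.1)).neg.continuousAt.continuousWithinAt)
    (fun x hx => (hw x (ha.1.trans_le hx.1)).neg.hasDerivWithinAt)
    (by simpa using hnear_nonneg a ha) continuousOn_const
    (fun _ _ => hasDerivWithinAt_const _ _ _)
    (fun x hx hwx => by simpa using hW x (ha.1.trans_le hx.1) (neg_eq_zero.1 hwx))
    ⟨har, le_rfl⟩
  simpa using h

/-- The radial form of `Δu ≥ c u^q` in `ℝ^(d+1)`, through the flux `r^d u'`, for a nondecreasing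
`u ≥ u₀ > 0`. -/
structure IsRadialSupersolution (d : ℕ) (c q u₀ : ℝ) (u u' W : ℝ → ℝ) : Prop where
  hasDerivAt : ∀ r, 0 < r → HasDerivAt u (u' r) r
  hasDerivAt_flux : ∀ r, 0 < r → HasDerivAt (fun s => s ^ d * u' s) (W r) r
  le_deriv_flux : ∀ r, 0 < r → c * r ^ d * u r ^ q ≤ W r
  deriv_nonneg : ∀ r, 0 < r → 0 ≤ u' r
  lower_pos : 0 < u₀
  lower_le : ∀ r, 0 < r → u₀ ≤ u r

namespace IsRadialSupersolution

variable {d : ℕ} {c q u₀ : ℝ} {u u' W : ℝ → ℝ}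

lemma pos (h : IsRadialSupersolution d c q u₀ u u' W) {r : ℝ} (hr : 0 < r) : 0 < u r :=
  h.lower_pos.trans_le (h.lower_le r hr)

lemma monotoneOn (h : IsRadialSupersolution d c q u₀ u u' W) : MonotoneOn u (Ioi 0) := by
  intro x hx y hy hxy
  have := mul_sub_le_sub_of_hasDerivAt hxy (fun z hz => h.hasDerivAt z (lt_of_lt_of_le hx hz.1))
    (fun z hz => h.deriv_nonneg z (lt_trans hx hz.1))
  linarith

lemma rpow_le_rpow_of_le (h : IsRadialSupersolution d c q u₀ u u' W) {R x s : ℝ} (hs : 0 ≤ s)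
    (hR : 0 < R) (hRx : R ≤ x) : u R ^ s ≤ u x ^ s :=
  rpow_le_rpow (h.pos hR).le (h.monotoneOn hR (hR.trans_le hRx) hRx) hs

lemma flux_growth (h : IsRadialSupersolution d c q u₀ u u' W) (hc : 0 ≤ c) (hq : 0 ≤ q)
    {R r : ℝ} (hR : 0 < R) (hRr : R ≤ r) :
    c * u R ^ q * (r ^ (d + 1) - R ^ (d + 1)) ≤ (d + 1) * (r ^ d * u' r) := by
  have hderiv : ∀ x ∈ Icc R r,
      HasDerivAt (fun y => (d + 1) * (y ^ d * u' y) - c * u R ^ q * y ^ (d + 1))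
      ((d + 1) * W x - c * u R ^ q * ((d + 1) * x ^ d)) x := by
    intro x hx
    have hpow := hasDerivAt_pow (d + 1) x
    simp only [Nat.add_sub_cancel, Nat.cast_add, Nat.cast_one] at hpow
    exact ((h.hasDerivAt_flux x (hR.trans_le hx.1)).const_mul _).sub (hpow.const_mul _)
  have hmono := mul_sub_le_sub_of_hasDerivAt (C := 0) hRr hderiv fun x hx => by
    have hx0 := hR.trans hx.1
    have hW := h.le_deriv_flux x hx0
    have huq := h.rpow_le_rpow_of_le hq hR hx.1.le
    have hxd : 0 ≤ c * x ^ d := by positivity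
    nlinarith [mul_le_mul_of_nonneg_left huq hxd]
  have hR' : 0 ≤ (d + 1) * (R ^ d * u' R) := by have := h.deriv_nonneg R hR; positivity
  linarith

lemma le_deriv_of_mem_Icc (h : IsRadialSupersolution d c q u₀ u u' W) (hc : 0 ≤ c) (hq : 0 ≤ q)
    {R x : ℝ} (hR : 0 < R) (hx : x ∈ Icc (3 * R / 2) (2 * R)) :
    c * u R ^ q * R ≤ 2 * (d + 1) * u' x := by
  have hx0 : 0 < x := by linarith [hx.1]
  have hgrowth := h.flux_growth hc hq hR (by linarith [hx.1] : R ≤ x)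
  have hRx : 3 / 2 * R ^ (d + 1) ≤ x ^ (d + 1) :=
    calc 3 / 2 * R ^ (d + 1) ≤ (3 / 2) ^ (d + 1) * R ^ (d + 1) := by
          gcongr; exact le_self_pow₀ (by norm_num) (by omega)
      _ = (3 * R / 2) ^ (d + 1) := by ring
      _ ≤ x ^ (d + 1) := by gcongr; exact hx.1
  have hcu : 0 ≤ c * u R ^ q := by have := h.pos hR; positivity
  have hsub : x ^ d * (R / 2) ≤ x ^ (d + 1) - R ^ (d + 1) := by
    have hxx : x ^ d * (3 * R / 2) ≤ x ^ (d + 1) := by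
      rw [pow_succ]; exact mul_le_mul_of_nonneg_left hx.1 (pow_pos hx0 d).le
    linarith
  have := mul_le_mul_of_nonneg_left hsub hcu
  have hxd := pow_pos hx0 d
  nlinarith

lemma rpow_mul_sq_le_sub_two_mul (h : IsRadialSupersolution d c q u₀ u u' W) (hc : 0 ≤ c)
    (hq : 0 ≤ q) {R : ℝ} (hR : 0 < R) : c * u R ^ q * R ^ 2 ≤ 4 * (d + 1) * (u (2 * R) - u R) := by
  have hint := mul_sub_le_sub_of_hasDerivAt (f := fun x => 2 * (d + 1) * u x)
    (by linarith : 3 * R / 2 ≤ 2 * R)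
    (fun x hx => (h.hasDerivAt x (by linarith [hx.1])).const_mul _)
    (fun x hx => h.le_deriv_of_mem_Icc hc hq hR (Ioo_subset_Icc_self hx))
  have hmono : u R ≤ u (3 * R / 2) :=
    h.monotoneOn hR (by simp only [mem_Ioi]; linarith) (by linarith)
  nlinarith

lemma energy (h : IsRadialSupersolution d c q u₀ u u' W) (hc : 0 ≤ c) (hq : 0 ≤ q)
    {R r : ℝ} (hR : 0 < R) (hRr : R ≤ r) :
    2 * c * (R ^ d) ^ 2 * (u r ^ (q + 1) - u R ^ (q + 1)) ≤ (q + 1) * (r ^ d * u' r) ^ 2 := by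
  -- Multiply `w' ≥ c r^d u^q` by `2(q+1) w = 2(q+1) r^d u'` and use `r^d ≥ R^d`.
  have hderiv : ∀ x ∈ Icc R r, HasDerivAt
      (fun y => (q + 1) * (y ^ d * u' y) ^ 2 - 2 * c * (R ^ d) ^ 2 * u y ^ (q + 1))
      ((q + 1) * (2 * (x ^ d * u' x) * W x) - 2 * c * (R ^ d) ^ 2 * (u' x * (q + 1) * u x ^ q))
      x := by
    intro x hx
    have hx0 := hR.trans_le hx.1
    have hflux : HasDerivAt (fun y => (y ^ d * u' y) ^ 2) (2 * (x ^ d * u' x) * W x) x := by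
      simpa using (h.hasDerivAt_flux x hx0).fun_pow 2
    have hupow := (h.hasDerivAt x hx0).rpow_const (p := q + 1) (Or.inl (h.pos hx0).ne')
    rw [add_sub_cancel_right] at hupow
    exact (hflux.const_mul _).sub (hupow.const_mul _)
  have hmono := mul_sub_le_sub_of_hasDerivAt (C := 0) hRr hderiv fun x hx => by
    have hx0 := hR.trans hx.1
    have hu' := h.deriv_nonneg x hx0
    have huq : 0 ≤ u x ^ q := (rpow_pos_of_pos (h.pos hx0) q).le
    have hRx : (R ^ d) ^ 2 ≤ (x ^ d) ^ 2 := by gcongr; exact hx.1.le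
    have hflux : 0 ≤ 2 * (q + 1) * (x ^ d * u' x) := by positivity
    have hW := mul_le_mul_of_nonneg_left (h.le_deriv_flux x hx0) hflux
    have hcu : 0 ≤ 2 * c * (q + 1) * u' x * u x ^ q := by positivity
    nlinarith [mul_le_mul_of_nonneg_left hRx hcu]
  have hR' : 0 ≤ (q + 1) * (R ^ d * u' R) ^ 2 := by positivity
  linarith

lemma two_mul_le_two_mul (h : IsRadialSupersolution d c q u₀ u u' W) (hc : 0 ≤ c) (hq : 1 ≤ q)
    {R : ℝ} (hR : 0 < R) (hlarge : 4 * (d + 1) ≤ c * u₀ ^ (q - 1) * R ^ 2) :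
    2 * u R ≤ u (2 * R) := by
  have huR := h.pos hR
  have hdoubling := h.rpow_mul_sq_le_sub_two_mul hc (by linarith) hR
  have hsplit : u R ^ q = u R ^ (q - 1) * u R := by
    rw [← rpow_add_one huR.ne', sub_add_cancel]
  have hlower : u₀ ^ (q - 1) ≤ u R ^ (q - 1) :=
    rpow_le_rpow h.lower_pos.le (h.lower_le R hR) (by linarith)
  have : 4 * (d + 1) * u R ≤ c * u R ^ q * R ^ 2 := by
    rw [hsplit]
    have := mul_le_mul_of_nonneg_right hlarge huR.le
    have : c * u₀ ^ (q - 1) * R ^ 2 * u R ≤ c * u R ^ (q - 1) * R ^ 2 * u R := by gcongr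
    linarith
  have hd : (0 : ℝ) < 4 * (d + 1) := by positivity
  nlinarith

lemma rpow_le_flux_sq (h : IsRadialSupersolution d c q u₀ u u' W) (hc : 0 ≤ c) (hq : 0 ≤ q)
    {R x : ℝ} (hR : 0 < R) (hdouble : 2 * u R ≤ u (2 * R)) (hx : 2 * R ≤ x) :
    c * (R ^ d) ^ 2 * u x ^ (q + 1) ≤ (q + 1) * (x ^ d * u' x) ^ 2 := by
  have hx0 : 0 < x := by linarith
  have hux : 2 * u R ≤ u x := hdouble.trans (h.monotoneOn (by simp only [mem_Ioi]; linarith) hx0 hx)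
  have hhalf : u R ^ (q + 1) ≤ u x ^ (q + 1) / 2 :=
    calc u R ^ (q + 1) = (2 * u R) ^ (q + 1) / 2 ^ (q + 1) := by
          rw [mul_rpow zero_le_two (h.pos hR).le]; field_simp
      _ ≤ u x ^ (q + 1) / 2 ^ (q + 1) := by
          gcongr; exact (mul_pos two_pos (h.pos hR)).le
      _ ≤ u x ^ (q + 1) / 2 := by
          gcongr
          · exact (rpow_pos_of_pos (h.pos hx0) _).le
          · exact self_le_rpow_of_one_le one_le_two (by linarith)
  have := h.energy hc hq hR (by linarith : R ≤ x)
  have hcR : 0 ≤ c * (R ^ d) ^ 2 := by positivity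
  nlinarith [mul_le_mul_of_nonneg_left hhalf hcR]

lemma mul_rpow_le_deriv (h : IsRadialSupersolution d c q u₀ u u' W) (hc : 0 ≤ c) (hq : 0 ≤ q)
    {R x : ℝ} (hR : 0 < R) (hdouble : 2 * u R ≤ u (2 * R)) (hx : x ∈ Icc (2 * R) (4 * R)) :
    √(c / (q + 1)) / 4 ^ d * u x ^ ((q + 1) / 2) ≤ u' x := by
  have hx0 : 0 < x := by linarith [hx.1]
  have hux := h.pos hx0
  have hu' := h.deriv_nonneg x hx0
  have hq1 : 0 < q + 1 := by linarith
  have hsq : (√(c / (q + 1)) * R ^ d * u x ^ ((q + 1) / 2)) ^ 2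
      = c * (R ^ d) ^ 2 * u x ^ (q + 1) / (q + 1) := by
    have hpow : (u x ^ ((q + 1) / 2)) ^ 2 = u x ^ (q + 1) := by
      rw [← rpow_mul_natCast hux.le]; ring_nf
    rw [mul_pow, mul_pow, sq_sqrt (by positivity), hpow]
    ring
  have hflux : √(c / (q + 1)) * R ^ d * u x ^ ((q + 1) / 2) ≤ x ^ d * u' x := by
    refine (pow_le_pow_iff_left₀ (by positivity) (by positivity) two_ne_zero).1 ?_
    rw [hsq, div_le_iff₀ hq1, mul_comm _ (q + 1)]
    exact h.rpow_le_flux_sq hc hq hR hdouble hx.1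
  have hxR : x ^ d * u' x ≤ 4 ^ d * R ^ d * u' x := by
    rw [← mul_pow]; gcongr; exact hx.2
  rw [div_mul_eq_mul_div, div_le_iff₀ (by positivity)]
  have hRd := pow_pos hR d
  nlinarith

end IsRadialSupersolution

theorem not_isRadialSupersolution {d : ℕ} {c q u₀ : ℝ} {u u' W : ℝ → ℝ} (hc : 0 < c)
    (hq : 1 < q) : ¬ IsRadialSupersolution d c q u₀ u u' W := by
  intro h
  set p := (q + 1) / 2
  set κ := √(c / (q + 1)) / 4 ^ d
  have hp : 1 < p := by simp only [p]; linarith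
  have hκ : 0 < κ * (p - 1) * 2 := by
    have : 0 < √(c / (q + 1)) := sqrt_pos.2 (by positivity)
    have : 0 < p - 1 := by linarith
    positivity
  obtain ⟨R, hR, hlarge, hlong⟩ : ∃ R, 0 < R ∧ 4 * (d + 1) ≤ c * u₀ ^ (q - 1) * R ^ 2 ∧
      u₀ ^ (1 - p) < κ * (p - 1) * 2 * R := by
    have hcu : 0 < c * u₀ ^ (q - 1) := mul_pos hc (rpow_pos_of_pos h.lower_pos _)
    exact ((eventually_gt_atTop 0).and
      ((((tendsto_pow_atTop two_ne_zero).const_mul_atTop hcu).eventually_ge_atTop _).and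
        ((tendsto_id.const_mul_atTop hκ).eventually_gt_atTop _))).exists
  have hdouble := h.two_mul_le_two_mul hc.le hq.le hR hlarge
  have hblowup := mul_sub_le_rpow_one_sub_of_mul_rpow_le_deriv (by linarith : 2 * R ≤ 4 * R) hp
    (fun x hx => h.pos (by linarith [hx.1])) (fun x hx => h.hasDerivAt x (by linarith [hx.1]))
    (fun x hx => h.mul_rpow_le_deriv hc.le (by linarith) hR hdouble (Ioo_subset_Icc_self hx))
  have hbound : u (2 * R) ^ (1 - p) ≤ u₀ ^ (1 - p) :=
    rpow_le_rpow_of_nonpos h.lower_pos (h.lower_le _ (by linarith)) (by linarith)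
  linarith

/-- The equation of the theorem in dimension `n = d + 1`. -/
structure IsRadialSolution (d : ℕ) (m α β : ℝ) (v : ℝ → ℝ) : Prop where
  pos : ∀ r, 0 ≤ r → 0 < v r
  contDiffOn : ContDiffOn ℝ 2 v (Ici 0)
  eq : ∀ r, 0 < r → (d : ℝ) / m * (deriv (deriv (fun s => v s ^ m)) r
    + d / r * deriv (fun s => v s ^ m) r) + α * v r + β * r * deriv v r = 0

namespace IsRadialSolution

variable {d : ℕ} {m α β : ℝ} {v : ℝ → ℝ}

lemma hasDerivAt (hv : IsRadialSolution d m α β v) {r : ℝ} (hr : 0 < r) :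
    HasDerivAt v (deriv v r) r :=
  ((hv.contDiffOn.differentiableOn two_ne_zero r hr.le).differentiableAt
    (Ici_mem_nhds hr)).hasDerivAt

lemma hasDerivAt_rpow (hv : IsRadialSolution d m α β v) {r : ℝ} (hr : 0 < r) :
    HasDerivAt (fun s => v s ^ m) (deriv v r * m * v r ^ (m - 1)) r :=
  (hv.hasDerivAt hr).rpow_const (Or.inl (hv.pos r hr.le).ne')

lemma deriv_rpow_eqOn (hv : IsRadialSolution d m α β v) :
    EqOn (deriv (fun s => v s ^ m)) (fun s => deriv v s * m * v s ^ (m - 1)) (Ioi 0) :=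
  fun _ hr => (hv.hasDerivAt_rpow hr).deriv

lemma differentiableAt_deriv_rpow (hv : IsRadialSolution d m α β v) {r : ℝ} (hr : 0 < r) :
    DifferentiableAt ℝ (deriv (fun s => v s ^ m)) r := by
  have hv' : DifferentiableAt ℝ (deriv v) r :=
    (((hv.contDiffOn.mono Ioi_subset_Ici_self).deriv_of_isOpen isOpen_Ioi (m := 1)
      (by norm_num)).differentiableOn one_ne_zero r hr).differentiableAt (Ioi_mem_nhds hr)
  have hformula : DifferentiableAt ℝ (fun s => deriv v s * m * v s ^ (m - 1)) r :=
    (hv'.mul_const m).mul ((hv.hasDerivAt hr).differentiableAt.rpow_const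
      (Or.inl (hv.pos r hr.le).ne'))
  exact hformula.congr_of_eventuallyEq (hv.deriv_rpow_eqOn.eventuallyEq_of_mem (Ioi_mem_nhds hr))

lemma tendsto_deriv (hv : IsRadialSolution d m α β v) :
    Tendsto (deriv v) (𝓝[>] 0) (𝓝 (derivWithin v (Ici 0) 0)) := by
  have hcont := hv.contDiffOn.continuousOn_derivWithin (uniqueDiffOn_Ici 0) (by norm_num) 0
    self_mem_Ici
  refine (hcont.mono_left (nhdsWithin_mono 0 Ioi_subset_Ici_self)).congr' ?_
  filter_upwards [self_mem_nhdsWithin] with r hr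
  exact derivWithin_of_mem_nhds (Ici_mem_nhds hr)

lemma tendsto_nhdsGT (hv : IsRadialSolution d m α β v) : Tendsto v (𝓝[>] 0) (𝓝 (v 0)) :=
  (hv.contDiffOn.continuousOn 0 self_mem_Ici).mono_left (nhdsWithin_mono 0 Ioi_subset_Ici_self)

lemma hasDerivAt_flux (hv : IsRadialSolution d m α β v) (hd : 0 < d) (hm : m ≠ 0) {r : ℝ}
    (hr : 0 < r) : HasDerivAt (fun s => s ^ d * deriv (fun s => v s ^ m) s)
      (m / d * r ^ d * (-(α * v r) - β * (r * deriv v r))) r := by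
  obtain ⟨e, rfl⟩ : ∃ e, d = e + 1 := ⟨d - 1, by omega⟩
  refine ((hasDerivAt_pow (e + 1) r).fun_mul
    (hv.differentiableAt_deriv_rpow hr).hasDerivAt).congr_deriv ?_
  have heq := hv.eq r hr
  simp only [Nat.add_sub_cancel, Nat.cast_add, Nat.cast_one] at heq ⊢
  field_simp at heq ⊢
  linear_combination r ^ e * heq

lemma tendsto_flux (hv : IsRadialSolution d m α β v) (hd : 0 < d) :
    Tendsto (fun s => s ^ d * deriv (fun s => v s ^ m) s) (𝓝[>] 0) (𝓝 0) := by
  have hlim : Tendsto (fun s => s ^ d * (deriv v s * m * v s ^ (m - 1))) (𝓝[>] 0)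
      (𝓝 (0 ^ d * (derivWithin v (Ici 0) 0 * m * v 0 ^ (m - 1)))) :=
    (((continuous_pow d).tendsto 0).mono_left nhdsWithin_le_nhds).mul
      ((hv.tendsto_deriv.mul_const m).mul
        ((continuousAt_rpow_const _ _ (Or.inl (hv.pos 0 le_rfl).ne')).tendsto.comp
          hv.tendsto_nhdsGT))
  rw [zero_pow hd.ne', zero_mul] at hlim
  refine hlim.congr' ?_
  filter_upwards [self_mem_nhdsWithin] with r hr
  rw [hv.deriv_rpow_eqOn hr]

lemma eventually_source_pos (hv : IsRadialSolution d m α β v) (hd : 0 < d) (hm : 0 < m)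
    (hα : α < 0) :
    ∀ᶠ r in 𝓝[>] 0, 0 < m / d * r ^ d * (-(α * v r) - β * (r * deriv v r)) := by
  have hlim : Tendsto (fun r => -(α * v r) - β * (r * deriv v r)) (𝓝[>] 0)
      (𝓝 (-(α * v 0) - β * (0 * derivWithin v (Ici 0) 0))) :=
    (hv.tendsto_nhdsGT.const_mul α).neg.sub
      (((tendsto_id.mono_left nhdsWithin_le_nhds).mul hv.tendsto_deriv).const_mul β)
  have hv0 := hv.pos 0 le_rfl
  have hpos : 0 < -(α * v 0) - β * (0 * derivWithin v (Ici 0) 0) := by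
    rw [zero_mul, mul_zero, sub_zero, neg_pos]; exact mul_neg_of_neg_of_pos hα hv0
  filter_upwards [hlim.eventually (eventually_gt_nhds hpos), self_mem_nhdsWithin] with r h hr
  exact mul_pos (mul_pos (div_pos hm (Nat.cast_pos.2 hd)) (pow_pos hr d)) h

lemma source_pos_of_deriv_nonneg (hv : IsRadialSolution d m α β v) (hd : 0 < d) (hm : 0 < m)
    (hα : α < 0) (hβ : β ≤ 0) {r : ℝ} (hr : 0 < r) (h : 0 ≤ deriv v r) :
    0 < m / d * r ^ d * (-(α * v r) - β * (r * deriv v r)) := by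
  have hαv : 0 < -(α * v r) := neg_pos.2 (mul_neg_of_neg_of_pos hα (hv.pos r hr.le))
  have hβv : 0 ≤ -(β * (r * deriv v r)) := by
    rw [neg_nonneg]; exact mul_nonpos_of_nonpos_of_nonneg hβ (by positivity)
  have : 0 < -(α * v r) - β * (r * deriv v r) := by linarith
  exact mul_pos (mul_pos (div_pos hm (Nat.cast_pos.2 hd)) (pow_pos hr d)) this

lemma deriv_nonneg_of_flux_nonneg (hv : IsRadialSolution d m α β v) (hm : 0 < m) {r : ℝ}
    (hr : 0 < r) (h : 0 ≤ r ^ d * deriv (fun s => v s ^ m) r) : 0 ≤ deriv v r := by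
  rw [hv.deriv_rpow_eqOn hr] at h
  have hpos : 0 < r ^ d * m * v r ^ (m - 1) := by have := hv.pos r hr.le; positivity
  exact nonneg_of_mul_nonneg_left (by linarith) hpos

lemma flux_nonneg (hv : IsRadialSolution d m α β v) (hd : 0 < d) (hm : 0 < m) (hα : α < 0)
    (hβ : β ≤ 0) {r : ℝ} (hr : 0 < r) : 0 ≤ r ^ d * deriv (fun s => v s ^ m) r :=
  nonneg_of_tendsto_zero_of_hasDerivAt (fun _ hs => hv.hasDerivAt_flux hd hm.ne' hs)
    (hv.tendsto_flux hd) (hv.eventually_source_pos hd hm hα)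
    (fun _ hs h0 => hv.source_pos_of_deriv_nonneg hd hm hα hβ hs
      (hv.deriv_nonneg_of_flux_nonneg hm hs h0.ge)) r hr

lemma monotoneOn (hv : IsRadialSolution d m α β v) (hderiv : ∀ r, 0 < r → 0 ≤ deriv v r) :
    MonotoneOn v (Ici 0) := by
  refine monotoneOn_of_deriv_nonneg (convex_Ici 0) hv.contDiffOn.continuousOn ?_ ?_
  all_goals rw [interior_Ici]
  · exact fun r hr => (hv.hasDerivAt hr).differentiableAt.differentiableWithinAt
  · exact hderiv

theorem isRadialSupersolution (hv : IsRadialSolution d m α β v) (hd : 0 < d) (hm : 0 < m)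
    (hα : α < 0) (hβ : β ≤ 0) :
    IsRadialSupersolution d (-α * m / d) m⁻¹ (v 0 ^ m) (fun s => v s ^ m)
      (deriv fun s => v s ^ m) (fun r => m / d * r ^ d * (-(α * v r) - β * (r * deriv v r))) := by
  have hflux (r : ℝ) (hr : 0 < r) := hv.flux_nonneg hd hm hα hβ hr
  have hderiv (r : ℝ) (hr : 0 < r) := hv.deriv_nonneg_of_flux_nonneg hm hr (hflux r hr)
  refine ⟨fun r hr => (hv.hasDerivAt_rpow hr).differentiableAt.hasDerivAt,
    fun r hr => hv.hasDerivAt_flux hd hm.ne' hr, fun r hr => ?_,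
    fun r hr => nonneg_of_mul_nonneg_right (hflux r hr) (by positivity),
    rpow_pos_of_pos (hv.pos 0 le_rfl) m, fun r hr => ?_⟩
  · rw [rpow_rpow_inv (hv.pos r hr.le).le hm.ne']
    have : 0 ≤ m / d * r ^ d * -(β * (r * deriv v r)) := by
      have := hderiv r hr
      have : 0 ≤ -(β * (r * deriv v r)) := by
        rw [neg_nonneg]; exact mul_nonpos_of_nonpos_of_nonneg hβ (by positivity)
      positivity
    have hsplit : m / d * r ^ d * (-(α * v r) - β * (r * deriv v r)) - -α * m / d * r ^ d * v r
        = m / d * r ^ d * -(β * (r * deriv v r)) := by ring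
    linarith
  · exact rpow_le_rpow (hv.pos 0 le_rfl).le (hv.monotoneOn hderiv self_mem_Ici hr.le hr.le) hm.le

end IsRadialSolution

theorem stmt_0_general (n : ℕ) (m α β η : ℝ) (hn : 3 ≤ n)
    (hm0 : 0 < m) (hm1 : m ≤ ((n : ℝ) - 2) / n)
    (hα : α < 0) (hβ : β ≤ 0) :
    ¬ ∃ v : ℝ → ℝ,
      (∀ r, 0 ≤ r → 0 < v r) ∧
      ContDiffOn ℝ 2 v (Set.Ici 0) ∧
      v 0 = η ∧ deriv v 0 = 0 ∧
      (∀ r, 0 < r →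
        ((n : ℝ) - 1) / m *
            (deriv (deriv (fun s => v s ^ m)) r
              + ((n : ℝ) - 1) / r * deriv (fun s => v s ^ m) r)
          + α * v r + β * r * deriv v r = 0) := by
  rintro ⟨v, hpos, hC2, -, -, hode⟩
  obtain ⟨d, rfl⟩ : ∃ d, n = d + 1 := ⟨n - 1, by omega⟩
  have hd : 0 < d := by omega
  have hv : IsRadialSolution d m α β v := ⟨hpos, hC2, by simpa using hode⟩
  have hm_lt_one : m < 1 := by
    have : ((d + 1 : ℕ) - 2 : ℝ) / (d + 1 : ℕ) < 1 := by
      rw [div_lt_one (by positivity)]; linarith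
    linarith
  exact not_isRadialSupersolution (div_pos (mul_pos (neg_pos.2 hα) hm0) (Nat.cast_pos.2 hd))
    ((one_lt_inv₀ hm0).2 hm_lt_one) (hv.isRadialSupersolution hd hm0 hα hβ)

/-- Non-existence of positive radially symmetric solutions when α < 0 and β ≤ 0. -/
theorem stmt_0 (n : ℕ) (m α β η : ℝ) (hn : 3 ≤ n)
    (hm0 : 0 < m) (hm1 : m ≤ ((n : ℝ) - 2) / n)
    (hη : 0 < η) (hα : α < 0) (hβ : β ≤ 0) :
    ¬ ∃ v : ℝ → ℝ,
      (∀ r, 0 ≤ r → 0 < v r) ∧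
      ContDiffOn ℝ 2 v (Set.Ici 0) ∧
      v 0 = η ∧ deriv v 0 = 0 ∧
      (∀ r, 0 < r →
        ((n : ℝ) - 1) / m *
            (deriv (deriv (fun s => v s ^ m)) r
              + ((n : ℝ) - 1) / r * deriv (fun s => v s ^ m) r)
          + α * v r + β * r * deriv v r = 0) :=
  stmt_0_general n m α β η hn hm0 hm1 hα hβ
end

section
/- Let n ≥ 3, 0 < m < 1, α ≥ nβ, α > 0, η > 0. If v is a positive global solution on [0,∞) of ((n-1)/m)((v^m)'' + ((n-1)/r)(v^m)') + αv + βrv' = 0 with v(0)=η, v'(0)=0, then 0 < r² v(r)^{1-m} ≤ 2n(n-1)/(α(1-m)) for all r > 0. -/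
/-!
Write `w = v ^ m`. The equation says `(r ^ (n-1) w')' = -(m / (n-1)) r ^ (n-1) (α v + β r v')`,
so the flux `F = n (n-1)/m · r ^ (n-1) w' + α r ^ n v` satisfies `F' = (α - nβ) r ^ n v'`.
Since `w' = m v ^ (m-1) v'`, this reads `F' = c (F - α r ^ n v) ≤ c F` with
`c = (α - nβ) r v ^ (1-m) / (n (n-1)) ≥ 0`, and `F 0 = 0`, so `F ≤ 0` by an integrating factor.
Unwinding `F ≤ 0` gives `(v ^ (m-1))' ≥ k r` with `k = (1-m) α / (n (n-1))`, hence
`v r ^ (m-1) ≥ k r ^ 2 / 2`, which is the bound.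
-/

open Real Set Filter

theorem nonpos_of_hasDerivAt_le_mul {f f' c : ℝ → ℝ} {a : ℝ} (hc : ContinuousOn c (Ici a))
    (hf : ContinuousOn f (Ici a)) (hf' : ∀ x, a < x → HasDerivAt f (f' x) x)
    (hle : ∀ x, a < x → f' x ≤ c x * f x) (ha : f a ≤ 0) :
    ∀ x, a ≤ x → f x ≤ 0 := by
  -- integrating factor `exp (-∫ c)`; `c` is frozen to `c a` left of `a` to make it continuous
  set Φ : ℝ → ℝ := fun x => ∫ t in a..x, c (max t a)
  have hΦ : ∀ x, HasDerivAt Φ (c (max x a)) x := fun x =>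
    ((hc.comp_continuous (continuous_id.max continuous_const) fun t => le_max_right t a)
      |>.integral_hasStrictDerivAt a x).hasDerivAt
  have hanti : AntitoneOn (fun x => f x * exp (-Φ x)) (Ici a) := by
    refine antitoneOn_of_hasDerivWithinAt_nonpos
      (f' := fun x => (f' x - c (max x a) * f x) * exp (-Φ x)) (convex_Ici a)
      (hf.mul fun x _ => ((hΦ x).continuousAt.neg.rexp).continuousWithinAt)
      (fun x hx => ?_) (fun x hx => ?_)
    · rw [interior_Ici] at hx
      exact (((hf' x hx).mul (hΦ x).fun_neg.exp).congr_deriv (by ring)).hasDerivWithinAt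
    · rw [interior_Ici] at hx
      rw [max_eq_left hx.le]
      nlinarith [hle x hx, exp_pos (-Φ x)]
  intro x hx
  have h := hanti self_mem_Ici hx hx
  simp only [Φ, intervalIntegral.integral_same, neg_zero, exp_zero, mul_one] at h
  nlinarith [exp_pos (-Φ x)]

theorem add_mul_sq_le_of_hasDerivAt {g g' : ℝ → ℝ} {k : ℝ} (hg : ContinuousOn g (Ici 0))
    (hg' : ∀ s, 0 < s → HasDerivAt g (g' s) s) (hk : ∀ s, 0 < s → k * s ≤ g' s) :
    ∀ r, 0 ≤ r → g 0 + k / 2 * r ^ 2 ≤ g r := by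
  have hmono : MonotoneOn (fun s => g s - k / 2 * s ^ 2) (Ici 0) := by
    refine monotoneOn_of_hasDerivWithinAt_nonneg (f' := fun s => g' s - k * s) (convex_Ici 0)
      (hg.sub (by fun_prop)) (fun s hs => ?_) (fun s hs => ?_)
    · rw [interior_Ici] at hs
      exact ((hg' s hs).sub ((hasDerivAt_pow 2 s).const_mul (k / 2)) |>.congr_deriv
        (by ring)).hasDerivWithinAt
    · rw [interior_Ici] at hs
      exact sub_nonneg.2 (hk s hs)
  intro r hr
  have h := hmono self_mem_Ici hr hr
  simp only at h
  linarith

theorem natCast_mul_natCast_sub_one_pos {n : ℕ} (hn : 2 ≤ n) : (0 : ℝ) < n * (n - 1) := by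
  have : (2 : ℝ) ≤ n := by exact_mod_cast hn
  nlinarith

section RadialFlux

variable (n : ℕ) (m α : ℝ) (v : ℝ → ℝ)

noncomputable def radialFlux (s : ℝ) : ℝ :=
  n * ((n - 1) / m) * (s ^ (n - 1) * deriv (fun t => v t ^ m) s) + α * (s ^ n * v s)

variable {n m α v} {β : ℝ}

theorem radialFlux_zero (hn : 2 ≤ n) : radialFlux n m α v 0 = 0 := by
  simp [radialFlux, zero_pow (show n - 1 ≠ 0 by omega), zero_pow (show n ≠ 0 by omega)]

theorem radialFlux_eq {s : ℝ} (hm : m ≠ 0) (hv : 0 < v s) (hd : DifferentiableAt ℝ v s) :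
    radialFlux n m α v s =
      n * (n - 1) * s ^ (n - 1) * v s ^ (m - 1) * deriv v s + α * s ^ n * v s := by
  rw [radialFlux, (hd.hasDerivAt.rpow_const (Or.inl hv.ne')).deriv]
  field_simp

theorem hasDerivAt_radialFlux {s : ℝ} (hn : 2 ≤ n) (hm : m ≠ 0) (hs : 0 < s)
    (hd : DifferentiableAt ℝ v s) (hd' : DifferentiableAt ℝ (deriv fun t => v t ^ m) s)
    (hode : (n - 1) / m * (deriv (deriv fun t => v t ^ m) s
        + (n - 1) / s * deriv (fun t => v t ^ m) s) + α * v s + β * s * deriv v s = 0) :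
    HasDerivAt (radialFlux n m α v) ((α - n * β) * (s ^ n * deriv v s)) s := by
  obtain ⟨k, rfl⟩ : ∃ k, n = k + 2 := ⟨n - 2, by omega⟩
  refine (((hasDerivAt_pow (k + 1) s).mul hd'.hasDerivAt).const_mul _ |>.add
    (((hasDerivAt_pow (k + 2) s).mul hd.hasDerivAt).const_mul α)).congr_deriv ?_
  linear_combination (norm := skip) ((k + 2 : ℕ) * s ^ (k + 1) : ℝ) * hode
  field_simp
  push_cast
  ring

theorem continuousOn_radialFlux (hn : 2 ≤ n) (hm : m ≠ 0) (hv : ∀ s, 0 ≤ s → 0 < v s)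
    (hreg : ContDiffOn ℝ 1 v (Ici 0)) : ContinuousOn (radialFlux n m α v) (Ici 0) := by
  have hcont : ContinuousOn (fun s => n * (n - 1) * s ^ (n - 1) * v s ^ (m - 1) *
      derivWithin v (Ici 0) s + α * s ^ n * v s) (Ici 0) := by
    have hvc := hreg.continuousOn
    have hrpow := hvc.rpow_const (p := m - 1) fun s hs => Or.inl (hv s hs).ne'
    have hderiv := hreg.continuousOn_derivWithin (uniqueDiffOn_Ici 0) le_rfl
    fun_prop
  refine hcont.congr fun s hs => ?_
  rcases (mem_Ici.mp hs).eq_or_lt with rfl | hs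
  · simp [radialFlux_zero hn, zero_pow (show n - 1 ≠ 0 by omega), zero_pow (show n ≠ 0 by omega)]
  · rw [radialFlux_eq hm (hv s hs.le) ((hreg.differentiableOn one_ne_zero).differentiableAt
      (Ici_mem_nhds hs)), ← derivWithin_of_mem_nhds (Ici_mem_nhds hs)]

theorem radialFlux_nonpos (hn : 2 ≤ n) (hm : m ≠ 0) (hα : 0 ≤ α) (hαβ : n * β ≤ α)
    (hv : ∀ s, 0 ≤ s → 0 < v s) (hreg : ContDiffOn ℝ 2 v (Ici 0))
    (hode : ∀ r, 0 < r → (n - 1) / m * (deriv (deriv fun t => v t ^ m) r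
        + (n - 1) / r * deriv (fun t => v t ^ m) r) + α * v r + β * r * deriv v r = 0) :
    ∀ s, 0 ≤ s → radialFlux n m α v s ≤ 0 := by
  have hvd : ∀ s, 0 < s → DifferentiableAt ℝ v s := fun s hs =>
    (hreg.differentiableOn two_ne_zero).differentiableAt (Ici_mem_nhds hs)
  have hw : ContDiffOn ℝ 2 (fun t => v t ^ m) (Ioi 0) := fun s hs =>
    ((hreg.contDiffAt (Ici_mem_nhds hs)).rpow_const_of_ne (hv s hs.le).ne').contDiffWithinAt
  have hw' : ∀ s, 0 < s → DifferentiableAt ℝ (deriv fun t => v t ^ m) s := fun s hs =>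
    ((hw.deriv_of_isOpen isOpen_Ioi le_rfl).differentiableOn one_ne_zero).differentiableAt
      (Ioi_mem_nhds hs)
  refine nonpos_of_hasDerivAt_le_mul
    (c := fun s => (α - n * β) * s * v s ^ (1 - m) / (n * (n - 1))) ?_
    (continuousOn_radialFlux hn hm hv (hreg.of_le one_le_two)) (fun s hs =>
      hasDerivAt_radialFlux hn hm hs (hvd s hs) (hw' s hs) (hode s hs)) (fun s hs => ?_)
    (radialFlux_zero hn).le
  · have hrpow := hreg.continuousOn.rpow_const (p := 1 - m) fun s hs => Or.inl (hv s hs).ne'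
    fun_prop
  · have hvs := hv s hs.le
    rw [radialFlux_eq hm hvs (hvd s hs)]
    have hinv : v s ^ (1 - m) * v s ^ (m - 1) = 1 := by rw [← rpow_add hvs]; norm_num
    have hpow : s ^ n = s * s ^ (n - 1) := by rw [← pow_succ']; congr 1; omega
    have hrest : 0 ≤ (α - n * β) * s * v s ^ (1 - m) / (n * (n - 1)) * (α * s ^ n * v s) := by
      have := sub_nonneg.2 hαβ
      have := hs.le
      have := natCast_mul_natCast_sub_one_pos hn
      positivity
    calc (α - n * β) * (s ^ n * deriv v s)
        = (α - n * β) * s * v s ^ (1 - m) / (n * (n - 1)) *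
            (n * (n - 1) * s ^ (n - 1) * v s ^ (m - 1) * deriv v s) := by
          rw [div_mul_eq_mul_div, eq_div_iff (natCast_mul_natCast_sub_one_pos hn).ne', hpow]
          linear_combination (-(α - n * β) * s * s ^ (n - 1) * deriv v s * (n * (n - 1))) * hinv
      _ ≤ _ := le_add_of_nonneg_right hrest
      _ = _ := by ring

theorem mul_le_deriv_rpow_of_radialFlux_nonpos {s : ℝ} (hn : 2 ≤ n) (hm : m ≠ 0) (hm1 : m ≤ 1)
    (hs : 0 < s) (hv : 0 < v s) (hd : DifferentiableAt ℝ v s)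
    (hflux : radialFlux n m α v s ≤ 0) :
    (1 - m) * α / (n * (n - 1)) * s ≤ deriv v s * (m - 1) * v s ^ (m - 1 - 1) := by
  have hrpow : v s ^ (m - 1) = v s * v s ^ (m - 1 - 1) := by
    rw [mul_comm, ← rpow_add_one hv.ne']; norm_num
  have hpow : s ^ n = s * s ^ (n - 1) := by rw [← pow_succ']; congr 1; omega
  rw [radialFlux_eq hm hv hd, hrpow, hpow] at hflux
  have key : n * (n - 1) * (v s ^ (m - 1 - 1) * deriv v s) + α * s ≤ 0 := by
    refine nonpos_of_mul_nonpos_right (a := s ^ (n - 1) * v s) ?_ (by positivity)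
    linarith
  rw [div_mul_eq_mul_div, div_le_iff₀ (natCast_mul_natCast_sub_one_pos hn)]
  nlinarith

end RadialFlux

theorem stmt_2_general (n : ℕ) (m α β : ℝ) (hn : 3 ≤ n)
    (hm0 : 0 < m) (hm1 : m < 1)
    (hαβ : α ≥ (n : ℝ) * β) (hα : 0 < α)
    (v : ℝ → ℝ) (hv : ∀ r, 0 ≤ r → 0 < v r)
    (hreg : ContDiffOn ℝ 2 v (Set.Ici 0))
    (hode : ∀ r, 0 < r →
      ((n : ℝ) - 1) / m *
          (deriv (deriv (fun s => v s ^ m)) r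
            + ((n : ℝ) - 1) / r * deriv (fun s => v s ^ m) r)
        + α * v r + β * r * deriv v r = 0) :
    ∀ r, 0 < r →
      0 < r ^ 2 * v r ^ (1 - m) ∧
      r ^ 2 * v r ^ (1 - m) ≤ 2 * n * ((n : ℝ) - 1) / (α * (1 - m)) := by
  intro r hr
  have hn2 : 2 ≤ n := by omega
  have hvd : ∀ s, 0 < s → DifferentiableAt ℝ v s := fun s hs =>
    (hreg.differentiableOn two_ne_zero).differentiableAt (Ici_mem_nhds hs)
  have hflux := radialFlux_nonpos hn2 hm0.ne' hα.le hαβ hv hreg hode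
  have hgrowth := add_mul_sq_le_of_hasDerivAt
    (hreg.continuousOn.rpow_const fun s hs => Or.inl (hv s hs).ne')
    (fun s hs => (hvd s hs).hasDerivAt.rpow_const (Or.inl (hv s hs.le).ne'))
    (fun s hs => mul_le_deriv_rpow_of_radialFlux_nonpos hn2 hm0.ne' hm1.le hs (hv s hs.le)
      (hvd s hs) (hflux s hs.le)) r hr.le
  have hvr := hv r hr.le
  have hinv : v r ^ (m - 1) * v r ^ (1 - m) = 1 := by rw [← rpow_add hvr]; norm_num
  have hn1 : (n : ℝ) - 1 ≠ 0 := by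
    have : (3 : ℝ) ≤ n := by exact_mod_cast hn
    linarith
  have hN := natCast_mul_natCast_sub_one_pos hn2
  refine ⟨by positivity, ?_⟩
  rw [le_div_iff₀ (by nlinarith)]
  calc r ^ 2 * v r ^ (1 - m) * (α * (1 - m))
      = (1 - m) * α / (n * (n - 1)) / 2 * r ^ 2 * v r ^ (1 - m) * (2 * (n * (n - 1))) := by
        field_simp
    _ ≤ v r ^ (m - 1) * v r ^ (1 - m) * (2 * (n * (n - 1))) := by
        have := rpow_pos_of_pos (hv 0 le_rfl) (m - 1)
        gcongr
        linarith
    _ = 2 * n * (n - 1) := by rw [hinv]; ring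

/-- Upper bound for r² v^(1-m) when α ≥ nβ and α > 0. -/
theorem stmt_2 (n : ℕ) (m α β η : ℝ) (hn : 3 ≤ n)
    (hm0 : 0 < m) (hm1 : m < 1)
    (hαβ : α ≥ (n : ℝ) * β) (hα : 0 < α) (hη : 0 < η)
    (v : ℝ → ℝ) (hv : ∀ r, 0 ≤ r → 0 < v r)
    (hreg : ContDiffOn ℝ 2 v (Set.Ici 0))
    (hv0 : v 0 = η) (hv'0 : deriv v 0 = 0)
    (hode : ∀ r, 0 < r →
      ((n : ℝ) - 1) / m *
          (deriv (deriv (fun s => v s ^ m)) r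
            + ((n : ℝ) - 1) / r * deriv (fun s => v s ^ m) r)
        + α * v r + β * r * deriv v r = 0) :
    ∀ r, 0 < r →
      0 < r ^ 2 * v r ^ (1 - m) ∧
      r ^ 2 * v r ^ (1 - m) ≤ 2 * n * ((n : ℝ) - 1) / (α * (1 - m)) :=
  stmt_2_general n m α β hn hm0 hm1 hαβ hα v hv hreg hode
end

section
/- Let n ≥ 3, m = (n-2)/(n+2), β > ρ/(n-2) > 0, α = (2β+ρ)/(1-m), with nβ > α, and let v be a radially symmetric positive solution of ((n-1)/m)Δ(v^m) + αv + βx·∇v = 0 on ℝⁿ such that w(r) = r² v(r)^{1-m} is strictly increasing and bounded below by a positive constant for r > 1. Then limsup_{r→∞} (∫₀^r z^{n-1} v(z) dz)/(r^n v(r)) ≤ (1-m)/(n(1-m)-2). -/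
/-!
Since `w(z) = z² v(z)^{1-m}` is increasing, `v(z) ≤ (r/z)^{2/(1-m)} v(r)` for `0 < z ≤ r`.
Integrating `z^{n-1}` against this power law gives, for every `r > 0`,
`∫₀^r z^{n-1} v ≤ r^n v(r) / (n - 2/(1-m))`, and `n - 2/(1-m) = (n(1-m) - 2)/(1-m) > 0`
because `1 - m = 4/(n+2)` and `n ≥ 3`.
-/

open Real Set Filter intervalIntegral

theorem le_div_rpow_mul_of_sq_mul_rpow_le {μ a b z r : ℝ} (hμ : 0 < μ) (ha : 0 ≤ a)
    (hb : 0 ≤ b) (hz : 0 < z) (hr : 0 ≤ r) (h : z ^ 2 * a ^ μ ≤ r ^ 2 * b ^ μ) :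
    a ≤ (r / z) ^ (2 / μ) * b := by
  have h' : a ^ μ ≤ (r / z) ^ (2:ℝ) * b ^ μ := by
    rw [rpow_two, div_pow, div_mul_eq_mul_div, le_div_iff₀ (by positivity)]
    linarith
  calc a = (a ^ μ) ^ μ⁻¹ := (rpow_rpow_inv ha hμ.ne').symm
    _ ≤ ((r / z) ^ (2:ℝ) * b ^ μ) ^ μ⁻¹ := by gcongr
    _ = (r / z) ^ (2 / μ) * b := by
      rw [mul_rpow (by positivity) (by positivity), ← rpow_mul (by positivity),
        rpow_rpow_inv hb hμ.ne', div_eq_mul_inv 2]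

theorem integral_le_of_le_mul_rpow {f : ℝ → ℝ} {C s r : ℝ} (hr : 0 ≤ r) (hs : -1 < s)
    (hf₀ : ∀ z ∈ Ioc 0 r, 0 ≤ f z) (hf : ∀ z ∈ Ioc 0 r, f z ≤ C * z ^ s) :
    ∫ z in 0..r, f z ≤ C * (r ^ (s + 1) / (s + 1)) := by
  have hg : MeasureTheory.IntegrableOn (fun z => C * z ^ s) (Ioc 0 r) :=
    ((intervalIntegrable_rpow' hs).const_mul C).1
  calc ∫ z in 0..r, f z ≤ ∫ z in 0..r, C * z ^ s := by
        rw [integral_of_le hr, integral_of_le hr]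
        exact MeasureTheory.integral_mono_of_nonneg
          (MeasureTheory.ae_restrict_of_forall_mem measurableSet_Ioc hf₀) hg
          (MeasureTheory.ae_restrict_of_forall_mem measurableSet_Ioc hf)
    _ = C * (r ^ (s + 1) / (s + 1)) := by
      rw [integral_const_mul, integral_rpow (Or.inl hs), zero_rpow (by linarith), sub_zero]

theorem integral_pow_mul_le_of_monotoneOn {n : ℕ} {μ r : ℝ} {v : ℝ → ℝ} (hμ : 0 < μ)
    (hnμ : 2 < n * μ) (hv : ∀ z ∈ Ioc 0 r, 0 < v z)
    (hw : MonotoneOn (fun z => z ^ 2 * v z ^ μ) (Ioi 0)) (hr : 0 < r) :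
    ∫ z in 0..r, z ^ (n - 1) * v z ≤ μ / (n * μ - 2) * (r ^ n * v r) := by
  have hn : 1 ≤ n := Nat.one_le_iff_ne_zero.mpr (by rintro rfl; norm_num at hnμ)
  have hvr : 0 < v r := hv r ⟨hr, le_rfl⟩
  set p := 2 / μ
  have hnp : n - p = (n * μ - 2) / μ := by simp only [p]; field_simp
  have hnp_pos : 0 < (n : ℝ) - p := by rw [hnp]; exact div_pos (by linarith) hμ
  have hbound : ∀ z ∈ Ioc 0 r, z ^ (n - 1) * v z ≤ r ^ p * v r * z ^ ((n - 1 - p : ℝ)) := by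
    intro z ⟨hz, hzr⟩
    have hvz : v z ≤ (r / z) ^ p * v r :=
      le_div_rpow_mul_of_sq_mul_rpow_le hμ (hv z ⟨hz, hzr⟩).le hvr.le hz hr.le
        (hw hz hr hzr)
    calc z ^ (n - 1) * v z ≤ z ^ (n - 1) * ((r / z) ^ p * v r) := by gcongr
      _ = r ^ p * v r * z ^ ((n - 1 - p : ℝ)) := by
        rw [div_rpow hr.le hz.le, rpow_sub hz, ← rpow_natCast, Nat.cast_sub hn, Nat.cast_one]
        field_simp
  calc ∫ z in 0..r, z ^ (n - 1) * v z
      ≤ r ^ p * v r * (r ^ ((n - 1 - p : ℝ) + 1) / ((n - 1 - p : ℝ) + 1)) :=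
        integral_le_of_le_mul_rpow hr.le (by linarith)
          (fun z hz => mul_nonneg (pow_nonneg hz.1.le _) (hv z hz).le) hbound
    _ = μ / (n * μ - 2) * (r ^ n * v r) := by
      rw [show (n - 1 - p : ℝ) + 1 = n - p by ring, rpow_sub hr, rpow_natCast, hnp]
      field_simp

theorem stmt_8_general (n : ℕ) (m : ℝ) (hn : 3 ≤ n)
    (hm : m = ((n : ℝ) - 2) / (n + 2))
    (v : ℝ → ℝ) (hv : ∀ r, 0 ≤ r → 0 < v r)
    (hmono : StrictMonoOn (fun r => r ^ 2 * v r ^ (1 - m)) (Set.Ioi (0 : ℝ))) :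
    Filter.limsup
        (fun r => (∫ z in (0 : ℝ)..r, z ^ (n - 1) * v z) / (r ^ n * v r)) atTop
      ≤ (1 - m) / ((n : ℝ) * (1 - m) - 2) := by
  have hn' : (3 : ℝ) ≤ n := by exact_mod_cast hn
  have hμ : 1 - m = 4 / (n + 2) := by rw [hm]; field_simp; ring
  have hμ_pos : 0 < 1 - m := by rw [hμ]; positivity
  have hnμ : 2 < n * (1 - m) := by
    rw [hμ, mul_div_assoc', lt_div_iff₀ (by positivity)]; linarith
  refine limsup_le_of_le (isCoboundedUnder_le_of_eventually_le atTop (x := 0) ?_) ?_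
  all_goals filter_upwards [eventually_gt_atTop 0] with r hr
  · exact div_nonneg (integral_nonneg hr.le fun z hz => mul_nonneg (pow_nonneg hz.1 _)
      (hv z hz.1).le) (mul_nonneg (pow_nonneg hr.le _) (hv r hr.le).le)
  · rw [div_le_iff₀ (mul_pos (pow_pos hr _) (hv r hr.le))]
    exact integral_pow_mul_le_of_monotoneOn hμ_pos hnμ (fun z hz => hv z hz.1.le)
      hmono.monotoneOn hr

/-- Limsup estimate for the ratio of the integral ∫₀^r z^{n-1} v to r^n v(r). -/
theorem stmt_8 (n : ℕ) (m α β ρ : ℝ) (hn : 3 ≤ n)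
    (hm : m = ((n : ℝ) - 2) / (n + 2)) (hρ : 0 < ρ / ((n : ℝ) - 2))
    (hβ : β > ρ / ((n : ℝ) - 2)) (hα : α = (2 * β + ρ) / (1 - m))
    (hnβ : (n : ℝ) * β > α)
    (v : ℝ → ℝ) (hv : ∀ r, 0 ≤ r → 0 < v r)
    (hreg : ContDiffOn ℝ 2 v (Set.Ici 0)) (hv'0 : deriv v 0 = 0)
    (hode : ∀ r, 0 < r →
      ((n : ℝ) - 1) / m *
          (deriv (deriv (fun s => v s ^ m)) r
            + ((n : ℝ) - 1) / r * deriv (fun s => v s ^ m) r)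
        + α * v r + β * r * deriv v r = 0)
    (hmono : StrictMonoOn (fun r => r ^ 2 * v r ^ (1 - m)) (Set.Ioi (0 : ℝ)))
    (hbd : ∃ C > (0 : ℝ), ∀ r, 1 < r → C ≤ r ^ 2 * v r ^ (1 - m)) :
    Filter.limsup
        (fun r => (∫ z in (0 : ℝ)..r, z ^ (n - 1) * v z) / (r ^ n * v r)) atTop
      ≤ (1 - m) / ((n : ℝ) * (1 - m) - 2) :=
  stmt_8_general n m hn hm v hv hmono
end

section
/- Let v be a positive C¹ function on (0,∞) and a₁ > 0 be such that lim_{r→∞} (r² v(r)^{1-m})/(log r) = a₁ for some 0 < m < 1, and suppose lim_{r→∞} r v'(r)/v(r) = a exists. Then a = -2/(1-m). -/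
/-!
Put `r = exp t` and `H t = log (r ^ 2 * v r ^ (1 - m)) = 2 t + (1 - m) log v (exp t)`.
The first limit says `H t = log t + O(1)`, so `H t / t → 0`. On the other hand
`H' t = 2 + (1 - m) r v'(r) / v(r) → 2 + (1 - m) a`, and a function whose derivative tends to `c`
satisfies `H t / t → c` (the mean value theorem). Hence `2 + (1 - m) a = 0`.
-/

open Real Set Filter Topology Asymptotics

theorem isLittleO_id_atTop_of_tendsto_deriv_zero {E : Type*} [NormedAddCommGroup E]
    [NormedSpace ℝ E] {f f' : ℝ → E}
    (hf : ∀ᶠ x in atTop, HasDerivAt f (f' x) x) (hf' : Tendsto f' atTop (𝓝 0)) :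
    f =o[atTop] id := by
  refine IsLittleO.of_bound fun ε hε => ?_
  obtain ⟨T, hT⟩ := eventually_atTop.mp <| (eventually_ge_atTop 0).and <|
    hf.and (hf'.eventually (Metric.closedBall_mem_nhds 0 (half_pos hε)))
  have hT0 : 0 ≤ T := (hT T le_rfl).1
  have hmvt : ∀ x ∈ Ici T, ‖f x - f T‖ ≤ ε / 2 * ‖x - T‖ :=
    fun x hx => (convex_Ici T).norm_image_sub_le_of_norm_hasDerivWithin_le
      (fun y hy => (hT y hy).2.1.hasDerivWithinAt)
      (fun y hy => mem_closedBall_zero_iff.mp (hT y hy).2.2) self_mem_Ici hx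
  filter_upwards [eventually_ge_atTop T, eventually_ge_atTop (2 * ‖f T‖ / ε)] with x hxT hxf
  have hfx := hmvt x hxT
  have hfT : ‖f T‖ ≤ ε / 2 * x := by
    rw [div_le_iff₀ hε] at hxf; linarith
  rw [Real.norm_of_nonneg (sub_nonneg.mpr hxT)] at hfx
  rw [id, Real.norm_of_nonneg (hT0.trans hxT)]
  nlinarith [norm_le_insert' (f x) (f T)]

theorem tendsto_inv_smul_atTop_of_tendsto_deriv {E : Type*} [NormedAddCommGroup E]
    [NormedSpace ℝ E] {f f' : ℝ → E} {c : E}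
    (hf : ∀ᶠ x in atTop, HasDerivAt f (f' x) x) (hf' : Tendsto f' atTop (𝓝 c)) :
    Tendsto (fun x => x⁻¹ • f x) atTop (𝓝 c) := by
  have hg : (fun x => f x - x • c) =o[atTop] id := by
    refine isLittleO_id_atTop_of_tendsto_deriv_zero (f' := fun x => f' x - c) ?_ ?_
    · filter_upwards [hf] with x hx
      exact hx.sub ((hasDerivAt_id x).smul_const c) |>.congr_deriv (by simp)
    · simpa using hf'.sub_const c
  refine (zero_add c ▸ hg.tendsto_inv_smul_nhds_zero.add_const c).congr' ?_
  filter_upwards [eventually_ne_atTop 0] with x hx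
  simp [smul_sub, smul_smul, hx]

theorem hasDerivAt_log_comp_exp {v : ℝ → ℝ} {t : ℝ} (hd : DifferentiableAt ℝ v (exp t))
    (hv : v (exp t) ≠ 0) :
    HasDerivAt (fun s => log (v (exp s))) (exp t * deriv v (exp t) / v (exp t)) t := by
  simpa only [Function.comp_def, mul_comm] using (hd.hasDerivAt.comp t (hasDerivAt_exp t)).log hv

theorem log_sq_mul_rpow_div_log_exp {v : ℝ → ℝ} {p t : ℝ} (hv : 0 < v (exp t)) (ht : 0 < t) :
    log (exp t ^ 2 * v (exp t) ^ p / log (exp t)) = 2 * t + p * log (v (exp t)) - log t := by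
  rw [log_exp, log_div (by positivity) ht.ne', log_mul (by positivity) (by positivity),
    log_pow, log_rpow hv, log_exp]
  push_cast
  ring

theorem tendsto_inv_mul_log_rpow_exp_of_tendsto_sq_mul_rpow_div_log {v : ℝ → ℝ} {p a₁ : ℝ}
    (hv : ∀ r, 0 < r → 0 < v r) (ha₁ : a₁ ≠ 0)
    (hlim : Tendsto (fun r => r ^ 2 * v r ^ p / log r) atTop (𝓝 a₁)) :
    Tendsto (fun t => t⁻¹ * (2 * t + p * log (v (exp t)))) atTop (𝓝 0) := by
  have hlog : Tendsto (fun t => log (exp t ^ 2 * v (exp t) ^ p / log (exp t))) atTop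
      (𝓝 (log a₁)) :=
    ((continuousAt_log ha₁).tendsto.comp hlim).comp tendsto_exp_atTop
  refine (add_zero (0 : ℝ) ▸ (hlog.div_atTop tendsto_id).add
    isLittleO_log_id_atTop.tendsto_div_nhds_zero).congr' ?_
  filter_upwards [eventually_gt_atTop 0] with t ht
  rw [log_sq_mul_rpow_div_log_exp (hv _ (exp_pos t)) ht, id]
  field_simp
  ring

theorem stmt_12_general (m a₁ a : ℝ) (hm1 : m < 1) (ha₁ : 0 < a₁)
    (v : ℝ → ℝ) (hv : ∀ r, 0 < r → 0 < v r)
    (hreg : ContDiffOn ℝ 1 v (Set.Ioi 0))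
    (hlim : Filter.Tendsto (fun r => r ^ 2 * v r ^ (1 - m) / Real.log r) atTop (nhds a₁))
    (ha : Filter.Tendsto (fun r => r * deriv v r / v r) atTop (nhds a)) :
    a = -2 / (1 - m) := by
  have hdiff : ∀ r, 0 < r → DifferentiableAt ℝ v r := fun r hr =>
    (hreg.differentiableOn one_ne_zero).differentiableAt (Ioi_mem_nhds hr)
  have hderiv : ∀ t, HasDerivAt (fun t => 2 * t + (1 - m) * log (v (exp t)))
      (2 + (1 - m) * (exp t * deriv v (exp t) / v (exp t))) t := fun t =>
    ((hasDerivAt_id t).const_mul 2).add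
      ((hasDerivAt_log_comp_exp (hdiff _ (exp_pos t)) (hv _ (exp_pos t)).ne').const_mul _)
      |>.congr_deriv (by simp)
  have hlim_deriv : Tendsto (fun t => 2 + (1 - m) * (exp t * deriv v (exp t) / v (exp t)))
      atTop (𝓝 (2 + (1 - m) * a)) :=
    ((ha.comp tendsto_exp_atTop).const_mul _).const_add 2
  have hzero : 2 + (1 - m) * a = 0 := tendsto_nhds_unique
    (tendsto_inv_smul_atTop_of_tendsto_deriv (.of_forall hderiv) hlim_deriv)
    (tendsto_inv_mul_log_rpow_exp_of_tendsto_sq_mul_rpow_div_log hv ha₁.ne' hlim)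
  have hm : 1 - m ≠ 0 := by linarith
  field_simp
  linarith

/-- If r² v^{1-m} / log r → a₁ > 0 and r v'/v → a, then a = -2/(1-m). -/
theorem stmt_12 (m a₁ a : ℝ) (hm0 : 0 < m) (hm1 : m < 1) (ha₁ : 0 < a₁)
    (v : ℝ → ℝ) (hv : ∀ r, 0 < r → 0 < v r)
    (hreg : ContDiffOn ℝ 1 v (Set.Ioi 0))
    (hlim : Filter.Tendsto (fun r => r ^ 2 * v r ^ (1 - m) / Real.log r) atTop (nhds a₁))
    (ha : Filter.Tendsto (fun r => r * deriv v r / v r) atTop (nhds a)) :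
    a = -2 / (1 - m) :=
  stmt_12_general m a₁ a hm1 ha₁ v hv hreg hlim ha
end

section
/- Let n ≥ 3, β > 0, ρ ∈ ℝ, and suppose R : [0,∞) → ℝ is a C² function and v a positive continuous function on [0,∞) satisfying R''(r) + ((n-1)/r)R'(r) + (β/(n-1)) v(r)^{1-m} r R'(r) = -(1/(n-1)) v(r)^{1-m} R(r)(R(r)-ρ) for all r > 0, with R' bounded near 0. If R(r)(R(r)-ρ) > 0 for all r ≥ 0, then R'(r) < 0 for all r > 0. -/
/-!
Multiplying the equation by the integrating factor `r ^ (n - 1) * exp G(r)`, where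
`G' = β / (n - 1) * r * v ^ (1 - m)`, turns its left-hand side into the derivative of
`W(r) = r ^ (n - 1) * exp G(r) * R'(r)`, while its right-hand side is negative. So `W` is strictly
decreasing on `(0, ∞)`; since `R'` is bounded near `0` and `n - 1 ≥ 1`, `W(0⁺) = 0`, hence `W < 0`
and therefore `R' < 0`.
-/

open Real Set Filter Topology

theorem StrictAntiOn.lt_of_tendsto_nhdsGT {α β : Type*} [LinearOrder α] [TopologicalSpace α]
    [OrderTopology α] [DenselyOrdered α] [LinearOrder β] [TopologicalSpace β]
    [OrderClosedTopology β] {f : α → β} {a x : α} {L : β} (hf : StrictAntiOn f (Ioi a))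
    (hL : Tendsto f (𝓝[>] a) (𝓝 L)) (hx : a < x) : f x < L := by
  have := nhdsGT_neBot_of_exists_gt ⟨x, hx⟩
  obtain ⟨y, hay, hyx⟩ := exists_between hx
  have hyL : f y ≤ L := ge_of_tendsto hL <| by
    filter_upwards [Ioo_mem_nhdsGT hay] with t ht
    exact (hf ht.1 hay ht.2).le
  exact (hf hay (hay.trans hyx) hyx).trans_le hyL

theorem exists_hasDerivAt_continuousWithinAt_of_continuousOn_Ici {f : ℝ → ℝ}
    (hf : ContinuousOn f (Ici 0)) :
    ∃ G : ℝ → ℝ, (∀ x, 0 < x → HasDerivAt G (f x) x) ∧ ContinuousWithinAt G (Ioi 0) 0 := by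
  have hint : ∀ x, 0 ≤ x → IntervalIntegrable f MeasureTheory.volume 0 x := fun x hx =>
    (hf.mono fun s hs => by rw [uIcc_of_le hx] at hs; exact hs.1).intervalIntegrable
  refine ⟨fun t => ∫ s in (0 : ℝ)..t, f s, fun x hx => ?_, ?_⟩
  · exact intervalIntegral.integral_hasDerivAt_right (hint x hx.le)
      (AEStronglyMeasurable.stronglyMeasurableAtFilter_of_mem
        (hf.aestronglyMeasurable measurableSet_Ici) (Ici_mem_nhds hx))
      (hf.continuousAt (Ici_mem_nhds hx))
  · exact (intervalIntegral.continuousWithinAt_primitive (MeasureTheory.measure_singleton 0)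
      (by simpa using hint 1 zero_le_one)).mono_of_mem_nhdsWithin (Icc_mem_nhdsGT one_pos)

section IntegratingFactor

variable {k : ℕ} {y y' p G : ℝ → ℝ}

theorem hasDerivAt_pow_mul_exp_mul {x : ℝ} (hx : x ≠ 0) (hy : HasDerivAt y (y' x) x)
    (hG : HasDerivAt G (p x) x) :
    HasDerivAt (fun t => t ^ k * exp (G t) * y t)
      (x ^ k * exp (G x) * (y' x + (k / x + p x) * y x)) x := by
  refine (((hasDerivAt_pow k x).mul hG.exp).mul hy).congr_deriv ?_
  simp only [Pi.mul_apply]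
  rcases k with _ | k
  · simp only [CharP.cast_eq_zero, zero_tsub, pow_zero, mul_one, zero_mul, one_mul, zero_add,
      zero_div]
    ring
  · field_simp
    simp only [Nat.cast_add, Nat.cast_one, add_tsub_cancel_right, pow_succ]
    ring

theorem tendsto_pow_mul_exp_mul_nhdsGT_zero (hk : k ≠ 0) (hG : ContinuousWithinAt G (Ioi 0) 0)
    (hy : IsBoundedUnder (· ≤ ·) (𝓝[>] 0) (fun t => ‖y t‖)) :
    Tendsto (fun t => t ^ k * exp (G t) * y t) (𝓝[>] 0) (𝓝 0) := by
  have hpow : Tendsto (fun t : ℝ => t ^ k) (𝓝[>] 0) (𝓝 0) := by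
    simpa [zero_pow hk] using
      ((continuous_pow k).tendsto (0 : ℝ)).mono_left nhdsWithin_le_nhds
  have hfactor : Tendsto (fun t => t ^ k * exp (G t)) (𝓝[>] 0) (𝓝 0) := by
    simpa using hpow.mul (continuous_exp.continuousAt.tendsto.comp hG)
  exact hfactor.zero_mul_isBoundedUnder_le hy

theorem neg_of_hasDerivAt_add_mul_neg (hk : k ≠ 0)
    (hy : ∀ x, 0 < x → HasDerivAt y (y' x) x) (hG : ∀ x, 0 < x → HasDerivAt G (p x) x)
    (hG0 : ContinuousWithinAt G (Ioi 0) 0)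
    (hy0 : IsBoundedUnder (· ≤ ·) (𝓝[>] 0) (fun t => ‖y t‖))
    (hneg : ∀ x, 0 < x → y' x + (k / x + p x) * y x < 0) {x : ℝ} (hx : 0 < x) :
    y x < 0 := by
  set W : ℝ → ℝ := fun t => t ^ k * exp (G t) * y t
  have hW : ∀ t, 0 < t → HasDerivAt W (t ^ k * exp (G t) * (y' t + (k / t + p t) * y t)) t :=
    fun t ht => hasDerivAt_pow_mul_exp_mul ht.ne' (hy t ht) (hG t ht)
  have hanti : StrictAntiOn W (Ioi 0) := by
    refine strictAntiOn_of_deriv_neg (convex_Ioi 0)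
      (fun t ht => (hW t ht).continuousAt.continuousWithinAt) fun t ht => ?_
    rw [interior_Ioi] at ht
    rw [(hW t ht).deriv]
    exact mul_neg_of_pos_of_neg (mul_pos (pow_pos ht k) (exp_pos _)) (hneg t ht)
  have hWx : W x < 0 := hanti.lt_of_tendsto_nhdsGT
    (tendsto_pow_mul_exp_mul_nhdsGT_zero hk hG0 hy0) hx
  exact neg_of_mul_neg_right hWx (by positivity)

end IntegratingFactor

theorem stmt_14_general (n : ℕ) (m β ρ : ℝ) (hn : 3 ≤ n)
    (R v : ℝ → ℝ)
    (hR : ContDiffOn ℝ 2 R (Set.Ici 0))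
    (hv : ∀ r, 0 ≤ r → 0 < v r) (hvc : ContinuousOn v (Set.Ici 0))
    (hode : ∀ r, 0 < r →
      deriv (deriv R) r + ((n : ℝ) - 1) / r * deriv R r
          + β / ((n : ℝ) - 1) * v r ^ (1 - m) * r * deriv R r
        = -(1 / ((n : ℝ) - 1)) * v r ^ (1 - m) * R r * (R r - ρ))
    (hR'bd : ∃ C : ℝ, ∃ δ > (0 : ℝ), ∀ r, 0 < r → r < δ → |deriv R r| ≤ C)
    (hpos : ∀ r, 0 ≤ r → 0 < R r * (R r - ρ)) :
    ∀ r, 0 < r → deriv R r < 0 := by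
  have hn1 : ((n - 1 : ℕ) : ℝ) = (n : ℝ) - 1 := by
    rw [Nat.cast_sub (by omega), Nat.cast_one]
  have hn1pos : (0 : ℝ) < (n : ℝ) - 1 := by
    rw [← hn1]; exact_mod_cast (by omega : 0 < n - 1)
  obtain ⟨G, hG, hG0⟩ := exists_hasDerivAt_continuousWithinAt_of_continuousOn_Ici
    (f := fun s => β / ((n : ℝ) - 1) * v s ^ (1 - m) * s)
    ((continuousOn_const.mul (hvc.rpow_const fun s hs => .inl (hv s hs).ne')).mul continuousOn_id)
  have hR'diff : DifferentiableOn ℝ (deriv R) (Ioi 0) :=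
    ((hR.mono Ioi_subset_Ici_self).deriv_of_isOpen (m := 1) isOpen_Ioi
      (by norm_num)).differentiableOn one_ne_zero
  have hR' : ∀ x, 0 < x → HasDerivAt (deriv R) (deriv (deriv R) x) x := fun x hx =>
    (hR'diff.differentiableAt (Ioi_mem_nhds hx)).hasDerivAt
  have hbdd : IsBoundedUnder (· ≤ ·) (𝓝[>] 0) (fun t => ‖deriv R t‖) := by
    obtain ⟨C, δ, hδ, hC⟩ := hR'bd
    exact isBoundedUnder_of_eventually_le (a := C) <| by
      filter_upwards [Ioo_mem_nhdsGT hδ] with t ht using hC t ht.1 ht.2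
  intro r hr
  refine neg_of_hasDerivAt_add_mul_neg (k := n - 1) (by omega) hR' hG hG0 hbdd (fun x hx => ?_) hr
  have hrhs : 0 < 1 / ((n : ℝ) - 1) * v x ^ (1 - m) * (R x * (R x - ρ)) := by
    have hvx := rpow_pos_of_pos (hv x hx.le) (1 - m)
    have hRx := hpos x hx.le
    positivity
  rw [hn1]
  linear_combination hode x hx + hrhs

/-- Monotonicity of the scalar curvature: R'(r) < 0 for all r > 0. -/
theorem stmt_14 (n : ℕ) (m β ρ : ℝ) (hn : 3 ≤ n) (hβ : 0 < β)
    (R v : ℝ → ℝ)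
    (hR : ContDiffOn ℝ 2 R (Set.Ici 0))
    (hv : ∀ r, 0 ≤ r → 0 < v r) (hvc : ContinuousOn v (Set.Ici 0))
    (hode : ∀ r, 0 < r →
      deriv (deriv R) r + ((n : ℝ) - 1) / r * deriv R r
          + β / ((n : ℝ) - 1) * v r ^ (1 - m) * r * deriv R r
        = -(1 / ((n : ℝ) - 1)) * v r ^ (1 - m) * R r * (R r - ρ))
    (hR'bd : ∃ C : ℝ, ∃ δ > (0 : ℝ), ∀ r, 0 < r → r < δ → |deriv R r| ≤ C)
    (hpos : ∀ r, 0 ≤ r → 0 < R r * (R r - ρ)) :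
    ∀ r, 0 < r → deriv R r < 0 :=
  stmt_14_general n m β ρ hn R v hR hv hvc hode hR'bd hpos
end

section
/- Let n ≥ 3, m = (n-2)/(n+2), β > 0, α = (2β+ρ)/(1-m) > 0, and let v be a radially symmetric positive solution of ((n-1)/m)Δ(v^m) + αv + βx·∇v = 0 on ℝⁿ with scalar curvature R(r) = ρ + 2β(1 + ((1-m)/2) r v'(r)/v(r)) satisfying R(0)(R(0)-ρ) > 0. Define K₀(r) = -R'(r)/(2β r v(r)^{1-m}) for r > 0. Then lim_{r→0} K₀(r) = R(0)(R(0)-ρ)/(2βn(n-1)) = (2β+ρ)/(n(n-1)). -/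
/-!
Derivatives at `0` are one-sided, i.e. taken within `[0, ∞)`. With `u = v ^ m` the radial equation
reads `(n - 1)² v^(m-1) v'/r = -((n - 1) v^(m-1) (v'' + (m - 1) v'²/v) + α v + β r v')`. The
right-hand side is continuous up to `r = 0`, so `v'/r` has a limit; this forces `v'(0) = 0`, hence
`v'/r → v''(0)`, and letting `r → 0` gives `n (n - 1) v''(0) = -α v(0)^(2-m)`. Since
`R' = β (1 - m) (r v'/v)'` and `(r v'/v)'/r = v'/(r v) + v''/v - (v'/v)² → 2 v''(0)/v(0)`, the
curvature `K₀` tends to `-(1 - m) v''(0) / v(0)^(2-m) = (1 - m) α / (n (n - 1))`, which is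
`(2β + ρ)/(n (n - 1))`.
-/

open Real Set Filter Topology

theorem ContDiffOn.tendsto_deriv_nhdsGT {f : ℝ → ℝ} {a : ℝ} {n : WithTop ℕ∞}
    (hf : ContDiffOn ℝ n f (Ici a)) (hn : 1 ≤ n) :
    Tendsto (deriv f) (𝓝[>] a) (𝓝 (derivWithin f (Ici a) a)) := by
  refine ((hf.continuousOn_derivWithin (uniqueDiffOn_Ici a) hn a self_mem_Ici).mono_left
    (nhdsWithin_mono a Ioi_subset_Ici_self)).congr' ?_
  filter_upwards [self_mem_nhdsWithin] with r (hr : a < r)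
  exact derivWithin_of_mem_nhds (Ici_mem_nhds hr)

theorem ContDiffOn.tendsto_deriv_deriv_nhdsGT {f : ℝ → ℝ} {a : ℝ} {n : WithTop ℕ∞}
    (hf : ContDiffOn ℝ n f (Ici a)) (hn : 2 ≤ n) :
    Tendsto (deriv (deriv f)) (𝓝[>] a)
      (𝓝 (derivWithin (derivWithin f (Ici a)) (Ici a) a)) := by
  refine ((hf.derivWithin (uniqueDiffOn_Ici a) (m := 1) hn).tendsto_deriv_nhdsGT le_rfl).congr' ?_
  filter_upwards [self_mem_nhdsWithin] with r (hr : a < r)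
  refine EventuallyEq.deriv_eq ?_
  filter_upwards [Ioi_mem_nhds hr] with s (hs : a < s)
  exact derivWithin_of_mem_nhds (Ici_mem_nhds hs)

theorem ContDiffOn.tendsto_deriv_slope_nhdsGT {f : ℝ → ℝ} {a : ℝ} {n : WithTop ℕ∞}
    (hf : ContDiffOn ℝ n f (Ici a)) (hn : 2 ≤ n) :
    Tendsto (fun r => (deriv f r - derivWithin f (Ici a) a) / (r - a)) (𝓝[>] a)
      (𝓝 (derivWithin (derivWithin f (Ici a)) (Ici a) a)) := by
  have hf' : ContDiffOn ℝ 1 (derivWithin f (Ici a)) (Ici a) :=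
    hf.derivWithin (uniqueDiffOn_Ici a) hn
  have hderiv := (((hf'.differentiableOn one_ne_zero) a self_mem_Ici).hasDerivWithinAt.mono
    Ioi_subset_Ici_self)
  rw [hasDerivWithinAt_iff_tendsto_slope' self_notMem_Ioi] at hderiv
  refine hderiv.congr' ?_
  filter_upwards [self_mem_nhdsWithin] with r (hr : a < r)
  rw [slope_def_field, derivWithin_of_mem_nhds (Ici_mem_nhds hr)]

theorem eq_zero_and_eq_of_tendsto_div {g : ℝ → ℝ} {g₀ b L : ℝ}
    (hg : Tendsto g (𝓝[>] 0) (𝓝 g₀))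
    (hslope : Tendsto (fun r => (g r - g₀) / r) (𝓝[>] 0) (𝓝 b))
    (hdiv : Tendsto (fun r => g r / r) (𝓝[>] 0) (𝓝 L)) : g₀ = 0 ∧ L = b := by
  have hg₀ : g₀ = 0 := by
    refine tendsto_nhds_unique hg ?_
    have hprod := hdiv.mul (tendsto_id.mono_left (nhdsWithin_le_nhds (a := 0)))
    rw [mul_zero] at hprod
    refine hprod.congr' ?_
    filter_upwards [self_mem_nhdsWithin] with r (hr : 0 < r)
    simp [hr.ne']
  subst hg₀
  exact ⟨rfl, tendsto_nhds_unique hdiv (by simpa using hslope)⟩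

theorem deriv_deriv_rpow_const {f : ℝ → ℝ} {x : ℝ} (p : ℝ) (hf : ContDiffAt ℝ 2 f x)
    (hx : f x ≠ 0) :
    deriv (deriv fun y => f y ^ p) x =
      p * f x ^ (p - 1) * (deriv (deriv f) x + (p - 1) * deriv f x ^ 2 / f x) := by
  have hderiv : deriv (fun y => f y ^ p) =ᶠ[𝓝 x] fun y => deriv f y * p * f y ^ (p - 1) := by
    filter_upwards [hf.eventually (by simp), hf.continuousAt.eventually_ne hx] with y hy hy0
    exact deriv_rpow_const (hy.differentiableAt (by norm_num)) (Or.inl hy0)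
  have hd : HasDerivAt (fun y => deriv f y * p * f y ^ (p - 1)) _ x :=
    (((hf.derivWithin (m := 1) le_rfl).differentiableAt one_ne_zero).hasDerivAt.mul_const p).mul
      ((hf.differentiableAt (by norm_num)).hasDerivAt.rpow_const (Or.inl hx))
  rw [hderiv.deriv_eq, hd.deriv, rpow_sub_one hx (p - 1)]
  field_simp

theorem initial_derivs_of_radial_ode {n m α β : ℝ} {v : ℝ → ℝ} (hm : m ≠ 0) (hn₀ : n ≠ 0)
    (hn₁ : n - 1 ≠ 0) (hreg : ContDiffOn ℝ 2 v (Ici 0)) (hv : ∀ r, 0 ≤ r → 0 < v r)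
    (hode : ∀ r, 0 < r →
      (n - 1) / m * (deriv (deriv fun s => v s ^ m) r + (n - 1) / r * deriv (fun s => v s ^ m) r)
        + α * v r + β * r * deriv v r = 0) :
    derivWithin v (Ici 0) 0 = 0 ∧
      derivWithin (derivWithin v (Ici 0)) (Ici 0) 0 = -α * v 0 ^ (2 - m) / (n * (n - 1)) := by
  have hv₀ := hv 0 le_rfl
  have hvT : Tendsto v (𝓝[>] 0) (𝓝 (v 0)) :=
    (hreg.continuousOn.continuousWithinAt self_mem_Ici).mono Ioi_subset_Ici_self
  have hpowT : Tendsto (fun r => v r ^ (m - 1)) (𝓝[>] 0) (𝓝 (v 0 ^ (m - 1))) :=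
    hvT.rpow_const (Or.inl hv₀.ne')
  have haT := hreg.tendsto_deriv_nhdsGT one_le_two
  have hbT := hreg.tendsto_deriv_deriv_nhdsGT le_rfl
  have hrT : Tendsto (fun r : ℝ => r) (𝓝[>] 0) (𝓝 0) := nhdsWithin_le_nhds
  have hsolve : ∀ᶠ r in 𝓝[>] 0, -((n - 1) * v r ^ (m - 1) *
        (deriv (deriv v) r + (m - 1) * deriv v r ^ 2 / v r) + α * v r + β * r * deriv v r) /
        ((n - 1) ^ 2 * v r ^ (m - 1)) = deriv v r / r := by
    filter_upwards [self_mem_nhdsWithin] with r (hr : 0 < r)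
    have hvr := hv r hr.le
    have hcd : ContDiffAt ℝ 2 v r := hreg.contDiffAt (Ici_mem_nhds hr)
    have hode' : (n - 1) * v r ^ (m - 1) * (deriv (deriv v) r + (m - 1) * deriv v r ^ 2 / v r
        + (n - 1) / r * deriv v r) + α * v r + β * r * deriv v r = 0 := by
      rw [← hode r hr, deriv_deriv_rpow_const m hcd hvr.ne',
        deriv_rpow_const (hcd.differentiableAt (by norm_num)) (Or.inl hvr.ne')]
      field_simp
    have := rpow_pos_of_pos hvr (m - 1)
    rw [div_eq_div_iff (by positivity) hr.ne']
    field_simp at hode' ⊢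
    linear_combination -hode'
  obtain ⟨ha₀, hb₀⟩ := eq_zero_and_eq_of_tendsto_div haT
    (by simpa using hreg.tendsto_deriv_slope_nhdsGT le_rfl)
    ((((((hpowT.const_mul (n - 1)).mul
      (hbT.add (((haT.pow 2).const_mul (m - 1)).div hvT hv₀.ne'))).add
      (hvT.const_mul α)).add ((hrT.const_mul β).mul haT)).neg.div
      (hpowT.const_mul ((n - 1) ^ 2)) (by positivity)).congr' hsolve)
  refine ⟨ha₀, ?_⟩
  have := rpow_pos_of_pos hv₀ (m - 1)
  rw [ha₀, div_eq_iff (by positivity)] at hb₀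
  rw [show 2 - m = 1 - (m - 1) by ring, rpow_sub hv₀, rpow_one]
  field_simp
  linear_combination -hb₀

theorem tendsto_curvature_nhdsGT_zero {v R : ℝ → ℝ} {m β ρ : ℝ} (hβ : β ≠ 0)
    (hreg : ContDiffOn ℝ 2 v (Ici 0)) (hv : ∀ r, 0 ≤ r → 0 < v r)
    (ha₀ : derivWithin v (Ici 0) 0 = 0)
    (hR : ∀ r, 0 < r → R r = ρ + 2 * β * (1 + (1 - m) / 2 * (r * deriv v r / v r))) :
    Tendsto (fun r => -deriv R r / (2 * β * r * v r ^ (1 - m))) (𝓝[>] 0)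
      (𝓝 (-(1 - m) * derivWithin (derivWithin v (Ici 0)) (Ici 0) 0 / v 0 ^ (2 - m))) := by
  have hv₀ := hv 0 le_rfl
  have hvT : Tendsto v (𝓝[>] 0) (𝓝 (v 0)) :=
    (hreg.continuousOn.continuousWithinAt self_mem_Ici).mono Ioi_subset_Ici_self
  have haT := hreg.tendsto_deriv_nhdsGT one_le_two
  have hbT := hreg.tendsto_deriv_deriv_nhdsGT le_rfl
  have hslope : Tendsto (fun r => deriv v r / r) (𝓝[>] 0)
      (𝓝 (derivWithin (derivWithin v (Ici 0)) (Ici 0) 0)) := by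
    simpa [ha₀] using hreg.tendsto_deriv_slope_nhdsGT le_rfl
  have hexpand : ∀ᶠ r in 𝓝[>] 0, -(1 - m) / 2 * (deriv v r / r / v r + deriv (deriv v) r / v r
      - (deriv v r / v r) ^ 2) / v r ^ (1 - m) = -deriv R r / (2 * β * r * v r ^ (1 - m)) := by
    filter_upwards [self_mem_nhdsWithin] with r (hr : 0 < r)
    have hcd : ContDiffAt ℝ 2 v r := hreg.contDiffAt (Ici_mem_nhds hr)
    have hvr := hv r hr.le
    have hd : HasDerivAt (fun s => s * deriv v s / v s)
        (((1 * deriv v r + r * deriv (deriv v) r) * v r - r * deriv v r * deriv v r) / v r ^ 2) r :=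
      ((hasDerivAt_id' r).mul
        ((hcd.derivWithin (m := 1) le_rfl).differentiableAt one_ne_zero).hasDerivAt).div
        ((hcd.differentiableAt (by norm_num)).hasDerivAt) hvr.ne'
    have hReq : R =ᶠ[𝓝 r] fun s => ρ + 2 * β * (1 + (1 - m) / 2 * (s * deriv v s / v s)) := by
      filter_upwards [Ioi_mem_nhds hr] with s (hs : 0 < s) using hR s hs
    have := rpow_pos_of_pos hvr (1 - m)
    rw [hReq.deriv_eq, deriv_const_add, deriv_const_mul_field, deriv_const_add,
      deriv_const_mul_field, hd.deriv]
    field_simp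
  have hlim := ((((hslope.div hvT hv₀.ne').add (hbT.div hvT hv₀.ne')).sub
    ((haT.div hvT hv₀.ne').pow 2)).const_mul (-(1 - m) / 2)).div
    (hvT.rpow_const (p := 1 - m) (Or.inl hv₀.ne')) (rpow_pos_of_pos hv₀ _).ne'
  have hval : -(1 - m) / 2 * (derivWithin (derivWithin v (Ici 0)) (Ici 0) 0 / v 0
      + derivWithin (derivWithin v (Ici 0)) (Ici 0) 0 / v 0 - (0 / v 0) ^ 2) / v 0 ^ (1 - m)
      = -(1 - m) * derivWithin (derivWithin v (Ici 0)) (Ici 0) 0 / v 0 ^ (2 - m) := by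
    rw [show 2 - m = 1 + (1 - m) by ring, rpow_add hv₀, rpow_one]
    field_simp
    ring
  rw [ha₀, hval] at hlim
  exact hlim.congr' hexpand

theorem stmt_15_general (n : ℕ) (m α β ρ : ℝ) (hn : 3 ≤ n)
    (hm : m = ((n : ℝ) - 2) / (n + 2)) (hβ : 0 < β)
    (hα : α = (2 * β + ρ) / (1 - m))
    (v R : ℝ → ℝ) (hv : ∀ r, 0 ≤ r → 0 < v r)
    (hreg : ContDiffOn ℝ 2 v (Set.Ici 0))
    (hode : ∀ r, 0 < r →
      ((n : ℝ) - 1) / m *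
          (deriv (deriv (fun s => v s ^ m)) r
            + ((n : ℝ) - 1) / r * deriv (fun s => v s ^ m) r)
        + α * v r + β * r * deriv v r = 0)
    (hRdef : ∀ r, 0 ≤ r →
      R r = ρ + 2 * β * (1 + (1 - m) / 2 * (r * deriv v r / v r)))
    (K₀ : ℝ → ℝ)
    (hK₀ : ∀ r, 0 < r → K₀ r = -(deriv R r) / (2 * β * r * v r ^ (1 - m))) :
    Filter.Tendsto K₀ (nhdsWithin 0 (Set.Ioi 0))
        (nhds (R 0 * (R 0 - ρ) / (2 * β * n * ((n : ℝ) - 1)))) ∧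
    R 0 * (R 0 - ρ) / (2 * β * n * ((n : ℝ) - 1)) = (2 * β + ρ) / ((n : ℝ) * (n - 1)) := by
  have hn₃ : (3 : ℝ) ≤ n := by exact_mod_cast hn
  have hm₀ : 0 < m := by rw [hm]; apply div_pos <;> linarith
  have hm₁ : m < 1 := by rw [hm, div_lt_one (by linarith)]; linarith
  obtain ⟨ha₀, hb₀⟩ :=
    initial_derivs_of_radial_ode hm₀.ne' (by linarith) (by linarith) hreg hv hode
  have hK := (tendsto_curvature_nhdsGT_zero hβ.ne' hreg hv ha₀ fun r hr => hRdef r hr.le).congr'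
    (eventually_nhdsWithin_of_forall (s := Ioi 0) fun r hr => (hK₀ r hr).symm)
  have hR₀ : R 0 = 2 * β + ρ := by rw [hRdef 0 le_rfl]; ring
  have hval :
      R 0 * (R 0 - ρ) / (2 * β * n * ((n : ℝ) - 1)) = (2 * β + ρ) / ((n : ℝ) * (n - 1)) := by
    rw [hR₀]; field_simp; ring
  refine ⟨?_, hval⟩
  convert hK using 2
  have := rpow_pos_of_pos (hv 0 le_rfl) (2 - m)
  rw [hval, hb₀, hα]
  field_simp [(sub_pos.2 hm₁).ne']

/-- The sectional curvature K₀ of planes perpendicular to the spheres tends to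
(2β+ρ)/(n(n-1)) at the origin. -/
theorem stmt_15 (n : ℕ) (m α β ρ : ℝ) (hn : 3 ≤ n)
    (hm : m = ((n : ℝ) - 2) / (n + 2)) (hβ : 0 < β)
    (hα : α = (2 * β + ρ) / (1 - m)) (hαpos : 0 < α)
    (v R : ℝ → ℝ) (hv : ∀ r, 0 ≤ r → 0 < v r)
    (hreg : ContDiffOn ℝ 2 v (Set.Ici 0)) (hv'0 : deriv v 0 = 0)
    (hode : ∀ r, 0 < r →
      ((n : ℝ) - 1) / m *
          (deriv (deriv (fun s => v s ^ m)) r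
            + ((n : ℝ) - 1) / r * deriv (fun s => v s ^ m) r)
        + α * v r + β * r * deriv v r = 0)
    (hRdef : ∀ r, 0 ≤ r →
      R r = ρ + 2 * β * (1 + (1 - m) / 2 * (r * deriv v r / v r)))
    (hRpos : 0 < R 0 * (R 0 - ρ))
    (K₀ : ℝ → ℝ)
    (hK₀ : ∀ r, 0 < r → K₀ r = -(deriv R r) / (2 * β * r * v r ^ (1 - m))) :
    Filter.Tendsto K₀ (nhdsWithin 0 (Set.Ioi 0))
        (nhds (R 0 * (R 0 - ρ) / (2 * β * n * ((n : ℝ) - 1)))) ∧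
    R 0 * (R 0 - ρ) / (2 * β * n * ((n : ℝ) - 1)) = (2 * β + ρ) / ((n : ℝ) * (n - 1)) :=
  stmt_15_general n m α β ρ hn hm hβ hα v R hv hreg hode hRdef K₀ hK₀
end
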